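/- For α > 0 let φ(α) = ∫_α^∞ (1/α − 1/H)·e^{−H} dH. If k_n > k_i > 0 and α_n, α_i > 0 satisfy φ(α_n) = k_n and φ(α_i) = k_i, then α_n < α_i and ∫_{α_n}^∞ e^{−H}/H dH > ∫_{α_i}^∞ e^{−H}/H dH. Consequently, since the noise-only constant k_n = −1.5·P̄/(σ_n²·ln(P_b/c)) exceeds the noise-plus-interference constant k_i = −1.5·P̄/((σ_n²+σ_i²)·ln(P_b/c)) whenever σ_i² > 0, the aggressive water-filling threshold is strictly smaller than the conservative one, and the outage-free spectral efficiency log₂(e)·(e^{−α_n}/α_n − k_n) of the aggressive scheme strictly exceeds the conservative scheme's spectral efficiency log₂(e)·(e^{−α_i}/α_i − k_i). -/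

import Mathlib

open MeasureTheory Real Set

/-! For `α > 0` the constraint functional splits as `φ(α) = e^{-α}/α - E₁(α)`, with
`E₁(α) = ∫_α^∞ e^{-H}/H dH`, so the spectral efficiency at the threshold is `log₂ e · E₁(α)`.
Since `φ` is antitone (its integrand decreases pointwise in `α` and the domain shrinks), a larger
constant forces a smaller threshold, and `E₁` is strictly antitone, so a smaller threshold gives
a larger efficiency. Finally `k = -1.5 P̄ / (σ² ln(P_b/c))` is a positive multiple of `1/σ²`, because
`ln(P_b/c) < 0`, hence decreases when interference is added to the noise. -/

noncomputable def expIntegralE1 (a : ℝ) : ℝ := ∫ H in Ioi a, exp (-H) / H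

noncomputable def waterFillingConstraint (α : ℝ) : ℝ := ∫ H in Ioi α, (1 / α - 1 / H) * exp (-H)

lemma integrableOn_exp_neg_div_Ioi {a : ℝ} (ha : 0 < a) :
    IntegrableOn (fun H => exp (-H) / H) (Ioi a) := by
  refine Integrable.mono' ((integrableOn_exp_neg_Ioi a).div_const a) ?_ ?_
  · exact ContinuousOn.aestronglyMeasurable
      (continuousOn_id.neg.rexp.div continuousOn_id fun H hH => (ha.trans hH).ne')
      measurableSet_Ioi
  · filter_upwards [ae_restrict_mem measurableSet_Ioi] with H hH
    rw [norm_of_nonneg (div_pos (exp_pos _) (ha.trans hH)).le]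
    exact div_le_div_of_nonneg_left (exp_pos _).le ha hH.le

lemma one_div_sub_one_div_mul_exp_neg (a H : ℝ) :
    (1 / a - 1 / H) * exp (-H) = exp (-H) / a - exp (-H) / H := by
  ring

lemma integrableOn_waterFillingIntegrand {a : ℝ} (ha : 0 < a) :
    IntegrableOn (fun H => (1 / a - 1 / H) * exp (-H)) (Ioi a) := by
  simp_rw [one_div_sub_one_div_mul_exp_neg]
  exact ((integrableOn_exp_neg_Ioi a).div_const a).sub (integrableOn_exp_neg_div_Ioi ha)

lemma exp_neg_div_sub_waterFillingConstraint {a : ℝ} (ha : 0 < a) :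
    exp (-a) / a - waterFillingConstraint a = expIntegralE1 a := by
  simp_rw [waterFillingConstraint, one_div_sub_one_div_mul_exp_neg]
  rw [integral_sub ((integrableOn_exp_neg_Ioi a).div_const a) (integrableOn_exp_neg_div_Ioi ha),
    integral_div, integral_exp_neg_Ioi, expIntegralE1, sub_sub_cancel]

lemma expIntegralE1_strictAntiOn : StrictAntiOn expIntegralE1 (Ioi 0) := by
  intro a (ha : 0 < a) b _ hab
  rw [← sub_pos, expIntegralE1, expIntegralE1,
    intervalIntegral.integral_Ioi_sub_Ioi (integrableOn_exp_neg_div_Ioi ha) hab.le]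
  refine intervalIntegral.intervalIntegral_pos_of_pos_on ?_ (fun H hH => ?_) hab
  · refine ContinuousOn.intervalIntegrable
      (continuousOn_id.neg.rexp.div continuousOn_id fun H hH => ?_)
    rw [uIcc_of_le hab.le] at hH
    exact (ha.trans_le hH.1).ne'
  · exact div_pos (exp_pos _) (ha.trans hH.1)

lemma waterFillingConstraint_antitoneOn : AntitoneOn waterFillingConstraint (Ioi 0) := by
  intro a (ha : 0 < a) b (hb : 0 < b) hab
  calc waterFillingConstraint b
      ≤ ∫ H in Ioi b, (1 / a - 1 / H) * exp (-H) := by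
        refine setIntegral_mono_on (integrableOn_waterFillingIntegrand hb)
          ((integrableOn_waterFillingIntegrand ha).mono_set (Ioi_subset_Ioi hab))
          measurableSet_Ioi fun H _ => ?_
        gcongr
    _ ≤ waterFillingConstraint a := by
        refine setIntegral_mono_set (integrableOn_waterFillingIntegrand ha) ?_
          (Ioi_subset_Ioi hab).eventuallyLE
        filter_upwards [ae_restrict_mem measurableSet_Ioi] with H (hH : a < H)
        have : 1 / H ≤ 1 / a := one_div_le_one_div_of_le ha hH.le
        exact mul_nonneg (sub_nonneg.mpr this) (exp_pos _).le

lemma div_mul_lt_div_mul_of_neg {c L s t : ℝ} (hc : c < 0) (hL : L < 0) (hs : 0 < s)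
    (hst : s < t) : c / (t * L) < c / (s * L) := by
  rw [div_mul_eq_div_div_swap, div_mul_eq_div_div_swap]
  exact div_lt_div_of_pos_left (div_pos_of_neg_of_neg hc hL) hs hst

theorem aggressive_threshold_lt_conservative_general
    (kn ki αn αi : ℝ) (hkn : ki < kn) (hαn : 0 < αn) (hαi : 0 < αi)
    (hφn : (∫ H in Ioi αn, (1 / αn - 1 / H) * Real.exp (-H)) = kn)
    (hφi : (∫ H in Ioi αi, (1 / αi - 1 / H) * Real.exp (-H)) = ki) :
    αn < αi ∧
    (∫ H in Ioi αn, Real.exp (-H) / H) > (∫ H in Ioi αi, Real.exp (-H) / H) ∧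
    Real.logb 2 (Real.exp 1) * (Real.exp (-αn) / αn - kn)
      > Real.logb 2 (Real.exp 1) * (Real.exp (-αi) / αi - ki) ∧
    (∀ Pbar σn2 σi2 Pb c : ℝ, 0 < Pbar → 0 < σn2 → 0 < σi2 → 0 < Pb → Pb < c →
      -1.5 * Pbar / (σn2 * Real.log (Pb / c))
        > -1.5 * Pbar / ((σn2 + σi2) * Real.log (Pb / c))) := by
  have hlt : αn < αi :=
    waterFillingConstraint_antitoneOn.reflect_lt hαi hαn (hφi.trans_lt (hkn.trans_eq hφn.symm))
  have hE1 : expIntegralE1 αi < expIntegralE1 αn := expIntegralE1_strictAntiOn hαn hαi hlt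
  refine ⟨hlt, hE1, ?_, ?_⟩
  · change waterFillingConstraint αn = kn at hφn
    change waterFillingConstraint αi = ki at hφi
    rw [← hφn, ← hφi, exp_neg_div_sub_waterFillingConstraint hαn, exp_neg_div_sub_waterFillingConstraint hαi]
    exact mul_lt_mul_of_pos_left hE1 (logb_pos one_lt_two (one_lt_exp_iff.mpr one_pos))
  · intro Pbar σn2 σi2 Pb c hP hσn hσi hPb hPbc
    have hc : 0 < c := hPb.trans hPbc
    exact div_mul_lt_div_mul_of_neg (by linarith) (log_neg (div_pos hPb hc)
      ((div_lt_one hc).mpr hPbc)) hσn (lt_add_of_pos_right σn2 hσi)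

/-- If `φ(α_n) = k_n` and `φ(α_i) = k_i` with `k_n > k_i > 0`, where
`φ(α) = ∫_α^∞ (1/α − 1/H)e^{−H} dH`, then `α_n < α_i` and
`∫_{α_n}^∞ e^{−H}/H dH > ∫_{α_i}^∞ e^{−H}/H dH`. Since the noise-only constant
`k_n = −1.5·P̄/(σ_n²·ln(P_b/c))` exceeds `k_i = −1.5·P̄/((σ_n²+σ_i²)·ln(P_b/c))` whenever
`σ_i² > 0`, the aggressive threshold is smaller than the conservative one and the
outage-free aggressive spectral efficiency `log₂(e)(e^{−α_n}/α_n − k_n)` strictly exceeds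
the conservative one `log₂(e)(e^{−α_i}/α_i − k_i)`. -/
theorem aggressive_threshold_lt_conservative
    (kn ki αn αi : ℝ) (hki : 0 < ki) (hkn : ki < kn) (hαn : 0 < αn) (hαi : 0 < αi)
    (hφn : (∫ H in Ioi αn, (1 / αn - 1 / H) * Real.exp (-H)) = kn)
    (hφi : (∫ H in Ioi αi, (1 / αi - 1 / H) * Real.exp (-H)) = ki) :
    αn < αi ∧
    (∫ H in Ioi αn, Real.exp (-H) / H) > (∫ H in Ioi αi, Real.exp (-H) / H) ∧
    Real.logb 2 (Real.exp 1) * (Real.exp (-αn) / αn - kn)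
      > Real.logb 2 (Real.exp 1) * (Real.exp (-αi) / αi - ki) ∧
    (∀ Pbar σn2 σi2 Pb c : ℝ, 0 < Pbar → 0 < σn2 → 0 < σi2 → 0 < Pb → Pb < c →
      -1.5 * Pbar / (σn2 * Real.log (Pb / c))
        > -1.5 * Pbar / ((σn2 + σi2) * Real.log (Pb / c))) :=
  aggressive_threshold_lt_conservative_general kn ki αn αi hkn hαn hαi hφn hφi
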